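/- Let l > 1. Then for all x, y ∈ ℝ: |x − y|² ≤ 2^{2(l−1)/l} |⌊x⌉^l − ⌊y⌉^l|^{2/l}. -/
import Mathlib


open Set Filter

/-- Signed power: `⌊x⌉^a = sign(x) * |x|^a`. -/
noncomputable def spow (x a : ℝ) : ℝ := Real.sign x * |x| ^ a

/-- Dilation `Λ_r(l, x) = (l^{r₁} x₁, …, l^{rₙ} xₙ)`. -/
noncomputable def dil {n : ℕ} (r : Fin n → ℝ) (l : ℝ) (x : Fin n → ℝ) : Fin n → ℝ :=
  fun i => l ^ r i * x i

/-- `x` is a solution of `ẋ = F(x)` on `[s, ∞)`. -/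
def IsSolOn {E : Type*} [NormedAddCommGroup E] [NormedSpace ℝ E]
    (F : E → E) (x : ℝ → E) (s : ℝ) : Prop :=
  ∀ t ∈ Set.Ici s, HasDerivWithinAt x (F (x t)) (Set.Ici s) t

/-- The origin is (locally) asymptotically stable for `ẋ = F(x)`. -/
def AsympStable {E : Type*} [NormedAddCommGroup E] [NormedSpace ℝ E] (F : E → E) : Prop :=
  (∀ ε > 0, ∃ η > 0, ∀ x : ℝ → E, IsSolOn F x 0 → ‖x 0‖ < η → ∀ t ≥ 0, ‖x t‖ < ε) ∧
  (∃ δ > 0, ∀ x : ℝ → E, IsSolOn F x 0 → ‖x 0‖ < δ →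
    Filter.Tendsto x Filter.atTop (nhds 0))

/-- The origin is small-time stable for `ẋ = F(x)`. -/
def SmallTimeStable {E : Type*} [NormedAddCommGroup E] [NormedSpace ℝ E] (F : E → E) : Prop :=
  ∀ ε > 0, ∃ η > 0, ∀ x : ℝ → E, IsSolOn F x 0 → ‖x 0‖ < η →
    x ε = 0 ∧ ∀ t ≥ 0, ‖x t‖ < ε


lemma real_super {p : ℝ} (a b : ℝ) (ha : 0 ≤ a) (hb : 0 ≤ b) (hp : 1 ≤ p) :
    a ^ p + b ^ p ≤ (a + b) ^ p := by
  have h := NNReal.coe_le_coe.mpr (NNReal.rpow_add_rpow_le_add a.toNNReal b.toNNReal hp)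
  push_cast [Real.coe_toNNReal _ ha, Real.coe_toNNReal _ hb] at h
  have hp0 : (0:ℝ) < p := lt_of_lt_of_le one_pos hp
  have hX : 0 ≤ a ^ p + b ^ p :=
    add_nonneg (Real.rpow_nonneg ha _) (Real.rpow_nonneg hb _)
  calc a ^ p + b ^ p = ((a ^ p + b ^ p) ^ (1/p)) ^ p := by
        rw [← Real.rpow_mul hX, one_div, inv_mul_cancel₀ hp0.ne', Real.rpow_one]
    _ ≤ (a + b) ^ p := Real.rpow_le_rpow (Real.rpow_nonneg hX _) h hp0.le

lemma real_conv {p : ℝ} (a b : ℝ) (ha : 0 ≤ a) (hb : 0 ≤ b) (hp : 1 ≤ p) :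
    (a + b) ^ p ≤ 2 ^ (p - 1) * (a ^ p + b ^ p) := by
  have h := NNReal.coe_le_coe.mpr (NNReal.rpow_add_le_mul_rpow_add_rpow a.toNNReal b.toNNReal hp)
  push_cast [Real.coe_toNNReal _ ha, Real.coe_toNNReal _ hb] at h
  exact h

lemma spow_of_nonneg {x : ℝ} (a : ℝ) (ha : a ≠ 0) (hx : 0 ≤ x) : spow x a = x ^ a := by
  rcases eq_or_lt_of_le hx with h | h
  · simp [spow, ← h, Real.zero_rpow ha]
  · rw [spow, Real.sign_of_pos h, abs_of_pos h, one_mul]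

lemma spow_neg (x a : ℝ) : spow (-x) a = - spow x a := by
  rw [spow, spow, Real.sign_neg, abs_neg]; ring

lemma key_nonneg {l : ℝ} (hl : 1 < l) {u v : ℝ} (hv : 0 ≤ v) (huv : v ≤ u) :
    (u - v) ^ l ≤ 2 ^ (l - 1) * (spow u l - spow v l) := by
  have hl0 : l ≠ 0 := by positivity
  rw [spow_of_nonneg l hl0 (hv.trans huv), spow_of_nonneg l hl0 hv]
  have h1 : (u - v) ^ l + v ^ l ≤ u ^ l := by
    have := real_super (u - v) v (sub_nonneg.mpr huv) hv hl.le
    rwa [sub_add_cancel] at this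
  have h2 : (1:ℝ) ≤ 2 ^ (l - 1) :=
    Real.one_le_rpow one_le_two (by linarith)
  nlinarith [Real.rpow_nonneg (sub_nonneg.mpr huv) l]

lemma key {l : ℝ} (hl : 1 < l) {u v : ℝ} (huv : v ≤ u) :
    (u - v) ^ l ≤ 2 ^ (l - 1) * (spow u l - spow v l) := by
  have hl0 : l ≠ 0 := by positivity
  rcases le_or_gt 0 v with hv | hv
  · exact key_nonneg hl hv huv
  rcases le_or_gt u 0 with hu | hu
  · have := key_nonneg hl (neg_nonneg.mpr hu) (neg_le_neg huv)
    rw [spow_neg, spow_neg] at this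
    have e : -v - -u = u - v := by ring
    rw [e] at this
    linarith
  · have hs := spow_neg (-v) l
    rw [neg_neg] at hs
    rw [spow_of_nonneg l hl0 hu.le, hs, spow_of_nonneg l hl0 (by linarith : (0:ℝ) ≤ -v)]
    have := real_conv u (-v) hu.le (by linarith) hl.le
    have e : u + -v = u - v := by ring
    rw [e] at this
    linarith

lemma main_half {l : ℝ} (hl : 1 < l) {x y : ℝ} (h : y ≤ x) :
    |x - y| ^ (2:ℕ) ≤ 2 ^ (2*(l-1)/l) * |spow x l - spow y l| ^ (2/l) := by
  have hl0 : (0:ℝ) < l := by linarith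
  have hk := key hl h
  have hxy : 0 ≤ x - y := sub_nonneg.mpr h
  have hD : 0 ≤ spow x l - spow y l := by
    have h2 : (0:ℝ) < 2 ^ (l - 1) := Real.rpow_pos_of_pos two_pos _
    nlinarith [Real.rpow_nonneg hxy l]
  rw [abs_of_nonneg hxy, abs_of_nonneg hD, ← Real.rpow_natCast (x - y) 2]
  push_cast
  have e1 : ((2:ℝ)) = l * (2 / l) := by field_simp
  calc (x - y) ^ (2:ℝ) = ((x - y) ^ l) ^ (2/l) := by
        rw [← Real.rpow_mul hxy, ← e1]
    _ ≤ (2 ^ (l - 1) * (spow x l - spow y l)) ^ (2/l) :=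
        Real.rpow_le_rpow (Real.rpow_nonneg hxy _) hk (by positivity)
    _ = 2 ^ (2*(l-1)/l) * (spow x l - spow y l) ^ (2/l) := by
        rw [Real.mul_rpow (by positivity) hD, ← Real.rpow_mul (by norm_num)]
        ring_nf

/-- For `l > 1`: `|x-y|² ≤ 2^{2(l-1)/l} |⌊x⌉^l - ⌊y⌉^l|^{2/l}`. -/
theorem stmt13 (l : ℝ) (hl : 1 < l) (x y : ℝ) :
    |x - y| ^ (2:ℕ) ≤ 2 ^ (2*(l-1)/l) * |spow x l - spow y l| ^ (2/l) := by
  rcases le_total y x with h | h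
  · exact main_half hl h
  · have := main_half hl h
    rwa [abs_sub_comm y x, abs_sub_comm (spow y l) (spow x l)] at this
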